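/- arXiv:2010.09099 — 2 statements merged into one kernel-verified Lean document; each statement's English description precedes it below -/
import Mathlib

section
/- Laplace mechanism is ε-differentially private: let g : D → ℝ be a function with sensitivity ω, i.e., |g(x) − g(x')| ≤ ω for all adjacent x, x' ∈ D. Define M(x) = g(x) + W where W ∼ Lap(0, ω/ε) with ε > 0. Then for every measurable set S ⊆ ℝ and adjacent x, x', P(M(x) ∈ S) ≤ e^ε · P(M(x') ∈ S). -/
/-! The law of `c + W`, `W ∼ Lap(0, b)`, has density `z ↦ p(z - c)` with `p` the Laplace density.
By the triangle inequality, moving the centre from `c'` to `c` changes `log p(z - ·)` by at most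
`|c - c'| / b` at every point `z`, so the two densities differ pointwise by a factor at most
`exp (|c - c'| / b)`, which is `≤ e^ε` for adjacent inputs when `b = ω / ε`. -/

open MeasureTheory

/-- The Laplace distribution `Lap(0, b)`: the measure on `ℝ` with density
`(1/(2b)) * exp (-|z|/b)` with respect to Lebesgue measure. -/
noncomputable def laplaceMeasure (b : ℝ) : Measure ℝ :=
  volume.withDensity (fun z => ENNReal.ofReal ((2 * b)⁻¹ * Real.exp (-|z| / b)))

open Real
open scoped ENNReal

theorem MeasureTheory.Measure.map_const_add_withDensity {G : Type*} [MeasurableSpace G]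
    [AddGroup G] [MeasurableAdd G] (μ : Measure G) [μ.IsAddLeftInvariant] (f : G → ℝ≥0∞)
    (c : G) :
    (μ.withDensity f).map (c + ·) = μ.withDensity (fun z => f (-c + z)) := by
  ext s hs
  rw [Measure.map_apply (measurable_const_add c) hs,
    withDensity_apply _ (hs.preimage (measurable_const_add c)), withDensity_apply _ hs,
    ← (measurePreserving_add_left μ c).setLIntegral_comp_preimage_emb
      (measurableEmbedding_addLeft c) (fun z => f (-c + z)) s]
  simp only [neg_add_cancel_left]

noncomputable def laplacePDF (b z : ℝ) : ℝ := (2 * b)⁻¹ * exp (-|z| / b)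

theorem laplaceMeasure_eq_withDensity (b : ℝ) :
    laplaceMeasure b = volume.withDensity (fun z => ENNReal.ofReal (laplacePDF b z)) := rfl

theorem laplacePDF_le_exp_mul {b : ℝ} (hb : 0 ≤ b) (z z' : ℝ) :
    laplacePDF b z ≤ exp (|z - z'| / b) * laplacePDF b z' := by
  have htri : -|z| ≤ |z - z'| + -|z'| := by
    linarith [abs_sub_abs_le_abs_sub z' z, abs_sub_comm z z']
  calc laplacePDF b z ≤ (2 * b)⁻¹ * exp ((|z - z'| + -|z'|) / b) := by
        unfold laplacePDF; gcongr
    _ = exp (|z - z'| / b) * laplacePDF b z' := by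
        rw [laplacePDF, add_div, exp_add]; ring

theorem laplaceMeasure_map_const_add_le {b : ℝ} (hb : 0 ≤ b) (c c' : ℝ) :
    (laplaceMeasure b).map (c + ·) ≤
      ENNReal.ofReal (exp (|c - c'| / b)) • (laplaceMeasure b).map (c' + ·) := by
  rw [laplaceMeasure_eq_withDensity, Measure.map_const_add_withDensity,
    Measure.map_const_add_withDensity, ← withDensity_smul' _ _ ENNReal.ofReal_ne_top]
  refine withDensity_mono (Filter.Eventually.of_forall fun z => ?_)
  simp only [Pi.smul_apply, smul_eq_mul]
  rw [← ENNReal.ofReal_mul (exp_nonneg _)]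
  refine ENNReal.ofReal_le_ofReal ((laplacePDF_le_exp_mul hb _ (-c' + z)).trans_eq ?_)
  rw [show -c + z - (-c' + z) = -(c - c') by ring, abs_neg]

/-- The Laplace mechanism is `ε`-differentially private: if `g` has sensitivity `ω`
with respect to the adjacency relation `Adj`, and `M x` is the law of `g x + W`
with `W ∼ Lap(0, ω/ε)`, then `P(M(x) ∈ S) ≤ e^ε · P(M(x') ∈ S)` for adjacent
`x, x'` and measurable `S`. -/
theorem laplace_mechanism_dp {D : Type*} (Adj : D → D → Prop) (g : D → ℝ)
    (ε ω : ℝ) (hε : 0 < ε) (hω : 0 < ω)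
    (hsens : ∀ x x', Adj x x' → |g x - g x'| ≤ ω)
    (M : D → Measure ℝ)
    (hM : ∀ x, M x = (laplaceMeasure (ω / ε)).map (fun w => g x + w)) :
    ∀ x x', Adj x x' → ∀ S : Set ℝ, MeasurableSet S →
      M x S ≤ ENNReal.ofReal (Real.exp ε) * M x' S := by
  intro x x' hadj S _
  have hb : 0 < ω / ε := div_pos hω hε
  have hexp : exp (|g x - g x'| / (ω / ε)) ≤ exp ε := by
    refine exp_le_exp.2 ((div_le_iff₀ hb).2 ?_)
    rw [mul_div_cancel₀ _ hε.ne']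
    exact hsens x x' hadj
  rw [hM, hM]
  calc _ ≤ ENNReal.ofReal (exp (|g x - g x'| / (ω / ε))) *
        (laplaceMeasure (ω / ε)).map (g x' + ·) S :=
        laplaceMeasure_map_const_add_le hb.le _ _ S
    _ ≤ _ := by gcongr
end

section
/- Cross-iteration privacy (Corollary 1): let θ1, θ2 be reals (phase angle estimates from possibly different iterations or regions), Γ ≠ 0, and let α1, α2 be independent Exp(ω/(|Γ|ε)) random variables. Then the noise Γ(α1 − α2) appearing in Γ((θ1+α1) − (θ2+α2)) is distributed as Lap(0, ω/ε); hence the mechanism (θ1, θ2) ↦ law of Γ((θ1+α1) − (θ2+α2)) is ε-differentially private with respect to the adjacency |Γ(θ1−θ2) − Γ(θ1'−θ2')| ≤ ω. -/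
open MeasureTheory ProbabilityTheory

open Real Set Filter Topology


lemma myExp_intOn_Ioi {c : ℝ} (hc : 0 < c) (a : ℝ) :
    IntegrableOn (fun x => rexp (-(c*x))) (Ioi a) := by
  simpa [neg_mul] using exp_neg_integrableOn_Ioi a hc

lemma myExp_int_Ioi {c : ℝ} (hc : 0 < c) (a : ℝ) :
    ∫ x in Ioi a, rexp (-(c*x)) = rexp (-(c*a))/c := by
  have := integral_comp_mul_left_Ioi (fun y => rexp (-y)) a hc
  simp only [smul_eq_mul] at this
  rw [this, integral_exp_neg_Ioi, eq_div_iff hc.ne']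
  field_simp

lemma myExp_intOn_Iic {c : ℝ} (hc : 0 < c) (a : ℝ) :
    IntegrableOn (fun x => rexp (c*x)) (Iic a) := by
  have A : MeasurableEmbedding (fun x : ℝ => -x) :=
    (Homeomorph.neg ℝ).isClosedEmbedding.measurableEmbedding
  have h1 : Measure.map (fun x : ℝ => -x) (volume.restrict (Ici (-a)))
      = (volume : Measure ℝ).restrict (Iic a) := by
    have hs : Ici (-a) = (fun x : ℝ => -x) ⁻¹' (Iic a) := by ext x; simp
    rw [hs, ← A.restrict_map, Measure.map_neg_eq_self]
  rw [IntegrableOn, ← h1, A.integrable_map_iff]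
  have h2 : IntegrableOn (fun x => rexp (-(c*x))) (Ici (-a)) := by
    rw [integrableOn_Ici_iff_integrableOn_Ioi]
    exact myExp_intOn_Ioi hc (-a)
  exact h2.congr_fun (fun x _ => by simp [Function.comp, mul_neg]) measurableSet_Ici

lemma myExp_int_Iic {c : ℝ} (hc : 0 < c) (a : ℝ) :
    ∫ x in Iic a, rexp (c*x) = rexp (c*a)/c := by
  have h := integral_comp_neg_Iic a (fun x => rexp (-(c*x)))
  simp only [mul_neg, neg_neg] at h
  rw [h, myExp_int_Ioi hc]
  ring_nf

lemma myExp_lint_Ioi {c : ℝ} (hc : 0 < c) (C a : ℝ) (hC : 0 ≤ C) :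
    ∫⁻ x in Ioi a, ENNReal.ofReal (C * rexp (-(c*x))) = ENNReal.ofReal (C * rexp (-(c*a))/c) := by
  rw [← ofReal_integral_eq_lintegral_ofReal ((myExp_intOn_Ioi hc a).const_mul C)
    (ae_of_all _ fun x => mul_nonneg hC (exp_pos _).le)]
  rw [integral_const_mul, myExp_int_Ioi hc, mul_div_assoc]

lemma myExp_lint_Iic {c : ℝ} (hc : 0 < c) (C a : ℝ) (hC : 0 ≤ C) :
    ∫⁻ x in Iic a, ENNReal.ofReal (C * rexp (c*x)) = ENNReal.ofReal (C * rexp (c*a)/c) := by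
  rw [← ofReal_integral_eq_lintegral_ofReal ((myExp_intOn_Iic hc a).const_mul C)
    (ae_of_all _ fun x => mul_nonneg hC (exp_pos _).le)]
  rw [integral_const_mul, myExp_int_Iic hc, mul_div_assoc]


lemma expMeasure_def (r : ℝ) : expMeasure r = volume.withDensity (exponentialPDF r) := rfl

lemma expMeasure_Iic {r : ℝ} (hr : 0 < r) (x : ℝ) :
    expMeasure r (Iic x) = ENNReal.ofReal (if 0 ≤ x then 1 - rexp (-(r*x)) else 0) := by
  rw [expMeasure_def, withDensity_apply _ measurableSet_Iic,
    lintegral_exponentialPDF_eq_antiDeriv hr]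

lemma expMeasure_Ici {r : ℝ} (hr : 0 < r) (u : ℝ) :
    expMeasure r (Ici u) = ENNReal.ofReal (rexp (-(r * max u 0))) := by
  haveI := isProbabilityMeasure_expMeasure hr
  have hIio : expMeasure r (Iio u) = expMeasure r (Iic u) := by
    rw [expMeasure_def, withDensity_apply _ measurableSet_Iio,
      withDensity_apply _ measurableSet_Iic, Measure.restrict_congr_set Iio_ae_eq_Iic]
  have hc : expMeasure r (Ici u) = 1 - expMeasure r (Iio u) := by
    rw [← compl_Iio, measure_compl measurableSet_Iio (measure_ne_top _ _), measure_univ]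
  rw [hc, hIio, expMeasure_Iic hr]
  rcases le_or_gt 0 u with h | h
  · rw [if_pos h, max_eq_left h, ← ENNReal.ofReal_one, ← ENNReal.ofReal_sub _ (by
      have := exp_le_one_iff.2 (by nlinarith : -(r*u) ≤ 0); linarith [exp_pos (-(r*u))])]
    congr 1; ring
  · rw [if_neg (not_le.2 h), max_eq_right h.le, ENNReal.ofReal_zero, tsub_zero, mul_zero,
      neg_zero, exp_zero, ENNReal.ofReal_one]

lemma laplace_Iic_nonpos {b : ℝ} (hb : 0 < b) {t : ℝ} (ht : t ≤ 0) :
    laplaceMeasure b (Iic t) = ENNReal.ofReal (rexp (t/b)/2) := by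
  rw [laplaceMeasure, withDensity_apply _ measurableSet_Iic]
  have : ∀ z ∈ Iic t, ENNReal.ofReal ((2 * b)⁻¹ * rexp (-|z| / b))
      = ENNReal.ofReal ((2 * b)⁻¹ * rexp (b⁻¹ * z)) := by
    intro z hz
    have hz0 : z ≤ 0 := le_trans hz ht
    rw [abs_of_nonpos hz0]
    ring_nf
  rw [setLIntegral_congr_fun_ae measurableSet_Iic (ae_of_all _ this),
    myExp_lint_Iic (inv_pos.2 hb) _ t (by positivity)]
  congr 1
  rw [div_eq_inv_mul t b]
  field_simp

lemma laplace_Ioi_nonneg {b : ℝ} (hb : 0 < b) {t : ℝ} (ht : 0 ≤ t) :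
    laplaceMeasure b (Ioi t) = ENNReal.ofReal (rexp (-(t/b))/2) := by
  rw [laplaceMeasure, withDensity_apply _ measurableSet_Ioi]
  have : ∀ z ∈ Ioi t, ENNReal.ofReal ((2 * b)⁻¹ * rexp (-|z| / b))
      = ENNReal.ofReal ((2 * b)⁻¹ * rexp (-(b⁻¹ * z))) := by
    intro z hz
    have hz0 : 0 ≤ z := le_trans ht (le_of_lt hz)
    rw [abs_of_nonneg hz0]
    ring_nf
  rw [setLIntegral_congr_fun_ae measurableSet_Ioi (ae_of_all _ this),
    myExp_lint_Ioi (inv_pos.2 hb) _ t (by positivity)]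
  congr 1
  rw [div_eq_inv_mul t b]
  field_simp

lemma laplace_prob {b : ℝ} (hb : 0 < b) : IsProbabilityMeasure (laplaceMeasure b) := by
  constructor
  rw [← Iic_union_Ioi (a := (0:ℝ)), measure_union (Iic_disjoint_Ioi le_rfl) measurableSet_Ioi,
    laplace_Iic_nonpos hb le_rfl, laplace_Ioi_nonneg hb le_rfl]
  simp only [zero_div, exp_zero, neg_zero]
  rw [← ENNReal.ofReal_add (by norm_num) (by norm_num)]
  norm_num

lemma laplace_Iic {b : ℝ} (hb : 0 < b) (t : ℝ) :
    laplaceMeasure b (Iic t)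
      = ENNReal.ofReal (if t ≤ 0 then rexp (t/b)/2 else 1 - rexp (-(t/b))/2) := by
  rcases le_or_gt t 0 with h | h
  · rw [if_pos h, laplace_Iic_nonpos hb h]
  · rw [if_neg (not_le.2 h)]
    haveI := laplace_prob hb
    have hc : laplaceMeasure b (Iic t) = 1 - laplaceMeasure b (Ioi t) := by
      rw [← compl_Ioi, measure_compl measurableSet_Ioi (measure_ne_top _ _), measure_univ]
    rw [hc, laplace_Ioi_nonneg hb h.le, ← ENNReal.ofReal_one,
      ← ENNReal.ofReal_sub _ (by positivity)]



lemma prod_diff_cdf {r : ℝ} (hr : 0 < r) (s : ℝ) :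
    ((expMeasure r).prod (expMeasure r)) {p : ℝ × ℝ | p.1 - p.2 ≤ s}
      = ENNReal.ofReal (if 0 ≤ s then 1 - rexp (-(r*s)) else 0)
        + ENNReal.ofReal (r * rexp (r*s) * rexp (-((2*r) * max s 0)) / (2*r)) := by
  haveI := isProbabilityMeasure_expMeasure hr
  have hmset : MeasurableSet {p : ℝ × ℝ | p.1 - p.2 ≤ s} :=
    measurableSet_le (measurable_fst.sub measurable_snd) measurable_const
  rw [Measure.prod_apply hmset]
  have hpre : ∀ x : ℝ, (Prod.mk x ⁻¹' {p : ℝ × ℝ | p.1 - p.2 ≤ s}) = Ici (x - s) := by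
    intro x; ext y; simp only [mem_preimage, mem_setOf_eq, mem_Ici]; constructor <;> intro h <;> linarith
  have h1 : ∫⁻ x, expMeasure r (Prod.mk x ⁻¹' {p : ℝ × ℝ | p.1 - p.2 ≤ s}) ∂(expMeasure r)
      = ∫⁻ x, ENNReal.ofReal (rexp (-(r * max (x - s) 0))) ∂(expMeasure r) := by
    apply lintegral_congr
    intro x
    rw [hpre x, expMeasure_Ici hr]
  rw [h1]
  have hfmeas : Measurable fun x : ℝ => ENNReal.ofReal (rexp (-(r * max (x - s) 0))) := by
    fun_prop
  have hpdfmeas : Measurable (exponentialPDF r) := by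
    unfold exponentialPDF
    exact (measurable_exponentialPDFReal r).ennreal_ofReal
  rw [expMeasure_def, lintegral_withDensity_eq_lintegral_mul _ hpdfmeas hfmeas]
  simp only [Pi.mul_apply]
  rw [← lintegral_add_compl (A := Iic s) _ measurableSet_Iic, compl_Iic]
  congr 1
  · -- part A
    have : ∀ x ∈ Iic s, (fun x => exponentialPDF r x * ENNReal.ofReal
        (rexp (-(r * max (x - s) 0)))) x = exponentialPDF r x := by
      intro x hx
      dsimp only
      have : max (x - s) 0 = 0 := max_eq_right (by simpa [sub_nonpos] using hx)
      simp [this]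
    rw [setLIntegral_congr_fun_ae measurableSet_Iic (ae_of_all _ this),
      lintegral_exponentialPDF_eq_antiDeriv hr]
  · -- part B
    have hstep : ∀ x ∈ Ioi s, (fun x => exponentialPDF r x * ENNReal.ofReal
        (rexp (-(r * max (x - s) 0)))) x
        = (Ici (0:ℝ)).indicator
            (fun x => ENNReal.ofReal ((r * rexp (r*s)) * rexp (-((2*r)*x)))) x := by
      intro x hx
      dsimp only
      have hmax : max (x - s) 0 = x - s := max_eq_left (by simpa [sub_nonneg] using le_of_lt hx)
      rcases le_or_gt 0 x with h0 | h0
      · rw [exponentialPDF_of_nonneg h0, indicator_of_mem (by exact h0), hmax,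
          ← ENNReal.ofReal_mul (by positivity)]
        congr 1
        rw [mul_assoc, mul_assoc, ← Real.exp_add, ← Real.exp_add]
        congr 1
        ring
      · rw [exponentialPDF_of_neg h0, indicator_of_notMem (by simpa using h0), zero_mul]
    rw [setLIntegral_congr_fun_ae measurableSet_Ioi (ae_of_all _ hstep),
      lintegral_indicator measurableSet_Ici _, Measure.restrict_restrict measurableSet_Ici]
    have hae : (Ici (0:ℝ) ∩ Ioi s : Set ℝ) =ᵐ[volume] Ioi (max s 0) := by
      rcases le_or_gt 0 s with h | h
      · have : Ici (0:ℝ) ∩ Ioi s = Ioi (max s 0) := by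
          rw [max_eq_left h]
          ext x; simp only [mem_inter_iff, mem_Ici, mem_Ioi]
          constructor
          · exact fun h' => h'.2
          · exact fun h' => ⟨le_trans h (le_of_lt h'), h'⟩
        rw [this]
        exact EventuallyEq.rfl
      · have hsub : (Ici (0:ℝ) ∩ Ioi s) \ Ioi (max s 0) ⊆ {0} := by
          intro x hx
          simp only [mem_diff, mem_inter_iff, mem_Ici, mem_Ioi, not_lt, mem_singleton_iff] at hx ⊢
          have := hx.2
          rw [max_eq_right h.le] at this
          exact le_antisymm this hx.1.1
        have hsub2 : Ioi (max s 0) \ (Ici (0:ℝ) ∩ Ioi s) = ∅ := by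
          rw [max_eq_right h.le]
          ext x
          simp only [mem_diff, mem_inter_iff, mem_Ici, mem_Ioi, mem_empty_iff_false, iff_false]
          rintro ⟨hx, hc⟩
          exact hc ⟨hx.le, h.trans hx⟩
        rw [eventuallyEq_set]
        have h1 : volume ((Ici (0:ℝ) ∩ Ioi s) \ Ioi (max s 0)) = 0 :=
          measure_mono_null hsub (measure_singleton 0)
        have h2 : volume (Ioi (max s 0) \ (Ici (0:ℝ) ∩ Ioi s)) = 0 := by rw [hsub2]; simp
        exact (MeasureTheory.ae_eq_set.2 ⟨h1, h2⟩).mem_iff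
    rw [Measure.restrict_congr_set hae, myExp_lint_Ioi (by positivity) _ _ (by positivity)]

lemma prod_diff_cdf' {r : ℝ} (hr : 0 < r) (s : ℝ) :
    ((expMeasure r).prod (expMeasure r)) {p : ℝ × ℝ | p.1 - p.2 ≤ s}
      = ENNReal.ofReal (if s ≤ 0 then rexp (r*s)/2 else 1 - rexp (-(r*s))/2) := by
  rw [prod_diff_cdf hr s]
  rcases le_or_gt s 0 with h | h
  · rw [if_pos h, max_eq_right h]
    have h0 : ENNReal.ofReal (if 0 ≤ s then 1 - rexp (-(r*s)) else 0) = 0 := by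
      split_ifs with h2
      · have : s = 0 := le_antisymm h h2
        simp [this]
      · simp
    rw [h0, zero_add, mul_zero, neg_zero, exp_zero, mul_one]
    congr 1
    field_simp
  · rw [if_neg (not_le.2 h), if_pos h.le, max_eq_left h.le]
    have hker : r * rexp (r*s) * rexp (-(2*r*s)) / (2*r) = rexp (-(r*s))/2 := by
      rw [mul_assoc, ← Real.exp_add]
      have : r*s + -(2*r*s) = -(r*s) := by ring
      rw [this]
      field_simp
    rw [hker, ← ENNReal.ofReal_add (by nlinarith [exp_le_one_iff.2 (by nlinarith : -(r*s) ≤ 0)])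
      (by positivity)]
    congr 1
    ring

lemma map_scaled_diff {r c : ℝ} (hr : 0 < r) (hc : c ≠ 0) :
    Measure.map (fun p : ℝ × ℝ => c * (p.1 - p.2)) ((expMeasure r).prod (expMeasure r))
      = laplaceMeasure (|c|/r) := by
  haveI := isProbabilityMeasure_expMeasure hr
  have hcabs : 0 < |c| := abs_pos.2 hc
  have hb : 0 < |c|/r := by positivity
  have hf : Measurable (fun p : ℝ × ℝ => c * (p.1 - p.2)) :=
    (measurable_fst.sub measurable_snd).const_mul c
  haveI : IsProbabilityMeasure
      (Measure.map (fun p : ℝ × ℝ => c * (p.1 - p.2)) ((expMeasure r).prod (expMeasure r))) :=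
    Measure.isProbabilityMeasure_map hf.aemeasurable
  apply Measure.ext_of_Iic
  intro t
  rw [Measure.map_apply hf measurableSet_Iic, laplace_Iic hb]
  have hmset : MeasurableSet {p : ℝ × ℝ | p.1 - p.2 ≤ t/|c|} :=
    measurableSet_le (measurable_fst.sub measurable_snd) measurable_const
  have hval : ((expMeasure r).prod (expMeasure r)) {p : ℝ × ℝ | p.1 - p.2 ≤ t/|c|}
      = ENNReal.ofReal (if t ≤ 0 then rexp (t/(|c|/r))/2 else 1 - rexp (-(t/(|c|/r)))/2) := by
    rw [prod_diff_cdf' hr]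
    have harg : r * (t/|c|) = t/(|c|/r) := by field_simp
    have hiff : t/|c| ≤ 0 ↔ t ≤ 0 := by rw [div_le_iff₀ hcabs, zero_mul]
    rw [harg]
    congr 1
    exact if_congr hiff rfl rfl
  rcases hc.lt_or_gt with hneg | hpos
  · have hset : (fun p : ℝ × ℝ => c * (p.1 - p.2)) ⁻¹' (Iic t)
        = Prod.swap ⁻¹' {p : ℝ × ℝ | p.1 - p.2 ≤ t/|c|} := by
      ext p
      simp only [mem_preimage, mem_Iic, Prod.swap, mem_setOf_eq]
      rw [abs_of_neg hneg]
      constructor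
      · intro h
        rw [le_div_iff₀ (by linarith : (0:ℝ) < -c)]
        nlinarith
      · intro h
        rw [le_div_iff₀ (by linarith : (0:ℝ) < -c)] at h
        nlinarith
    rw [hset, ← Measure.map_apply measurable_swap (by exact hmset), Measure.prod_swap, hval]
  · have hset : (fun p : ℝ × ℝ => c * (p.1 - p.2)) ⁻¹' (Iic t)
        = {p : ℝ × ℝ | p.1 - p.2 ≤ t/|c|} := by
      ext p
      simp only [mem_preimage, mem_Iic, mem_setOf_eq]
      rw [abs_of_pos hpos, le_div_iff₀ hpos]
      constructor <;> intro h <;> nlinarith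
    rw [hset, hval]

lemma laplace_density_meas (b c : ℝ) :
    Measurable (fun z : ℝ => ENNReal.ofReal ((2 * b)⁻¹ * rexp (-|z - c| / b))) := by
  fun_prop

lemma map_add_laplace (b c : ℝ) :
    Measure.map (fun x => c + x) (laplaceMeasure b)
      = volume.withDensity (fun z => ENNReal.ofReal ((2*b)⁻¹ * rexp (-|z - c| / b))) := by
  ext S hS
  rw [Measure.map_apply (measurable_const_add c) hS, laplaceMeasure,
    withDensity_apply _ (hS.preimage (measurable_const_add c)), withDensity_apply _ hS]
  have hmeas0 : Measurable (fun z : ℝ => ENNReal.ofReal ((2 * b)⁻¹ * rexp (-|z| / b))) := by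
    fun_prop
  rw [← lintegral_indicator (hS.preimage (measurable_const_add c)) _,
    ← lintegral_indicator hS _]
  have hpt : ∀ x : ℝ, ((fun x => c + x) ⁻¹' S).indicator
      (fun z : ℝ => ENNReal.ofReal ((2 * b)⁻¹ * rexp (-|z| / b))) x
      = S.indicator (fun z : ℝ => ENNReal.ofReal ((2*b)⁻¹ * rexp (-|z - c| / b))) (c + x) := by
    intro x
    by_cases hx : c + x ∈ S
    · rw [indicator_of_mem (by exact hx), indicator_of_mem hx]
      simp
    · rw [indicator_of_notMem (by exact hx), indicator_of_notMem hx]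
  rw [lintegral_congr hpt, lintegral_add_left_eq_self _ c]

lemma laplace_dp {b ε : ℝ} (hb : 0 < b) {c c' : ℝ} (hcc : |c - c'| ≤ b * ε)
    (S : Set ℝ) (hS : MeasurableSet S) :
    Measure.map (fun x => c + x) (laplaceMeasure b) S
      ≤ ENNReal.ofReal (rexp ε) * Measure.map (fun x => c' + x) (laplaceMeasure b) S := by
  rw [map_add_laplace, map_add_laplace, withDensity_apply _ hS, withDensity_apply _ hS,
    ← lintegral_const_mul' _ _ ENNReal.ofReal_ne_top]
  apply lintegral_mono
  intro z
  dsimp only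
  rw [← ENNReal.ofReal_mul (exp_pos ε).le]
  apply ENNReal.ofReal_le_ofReal
  have habs : |z - c'| - |z - c| ≤ b * ε := by
    have h1 : |z - c'| - |z - c| ≤ |(z - c') - (z - c)| := abs_sub_abs_le_abs_sub _ _
    have h2 : (z - c') - (z - c) = c - c' := by ring
    rw [h2] at h1
    linarith
  have h3 : (|z - c'| - |z - c|)/b ≤ ε := by rw [div_le_iff₀ hb]; linarith
  have h4 : -|z - c| / b - -|z - c'| / b = (|z - c'| - |z - c|) / b := by ring
  have h5 : -|z - c| / b ≤ ε + -|z - c'| / b := by linarith [h4 ▸ h3]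
  calc (2*b)⁻¹ * rexp (-|z - c| / b) ≤ (2*b)⁻¹ * (rexp ε * rexp (-|z - c'| / b)) := by
        rw [← Real.exp_add]
        exact mul_le_mul_of_nonneg_left (exp_le_exp.2 h5) (by positivity)
    _ = rexp ε * ((2*b)⁻¹ * rexp (-|z - c'| / b)) := by ring




/-- Cross-iteration privacy: for phase angle estimates `θ1, θ2` from possibly
different iterations or regions, with independent noises
`α1, α2 ∼ Exp(ω/(|Γ|ε))`, the noise `Γ(α1 - α2)` in `Γ((θ1+α1) - (θ2+α2))` is
distributed `Lap(0, ω/ε)`, and the mechanism `(θ1, θ2) ↦ law of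
Γ((θ1+α1) - (θ2+α2))` is `ε`-differentially private with respect to the
adjacency `|Γ(θ1-θ2) - Γ(θ1'-θ2')| ≤ ω`. -/
theorem cross_iteration_privacy {Ω : Type*} [MeasurableSpace Ω] (P : Measure Ω)
    [IsProbabilityMeasure P] (Γ ε ω : ℝ) (hΓ : Γ ≠ 0) (hε : 0 < ε) (hω : 0 < ω)
    (α1 α2 : Ω → ℝ) (hα1 : Measurable α1) (hα2 : Measurable α2)
    (hindep : IndepFun α1 α2 P)
    (hlaw1 : P.map α1 = expMeasure (ω / (|Γ| * ε))⁻¹)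
    (hlaw2 : P.map α2 = expMeasure (ω / (|Γ| * ε))⁻¹) :
    (P.map (fun a => Γ * (α1 a - α2 a)) = laplaceMeasure (ω / ε)) ∧
    (∀ θ1 θ2 θ1' θ2' : ℝ, |Γ * (θ1 - θ2) - Γ * (θ1' - θ2')| ≤ ω →
      ∀ S : Set ℝ, MeasurableSet S →
        P.map (fun a => Γ * ((θ1 + α1 a) - (θ2 + α2 a))) S ≤
          ENNReal.ofReal (Real.exp ε) *
            P.map (fun a => Γ * ((θ1' + α1 a) - (θ2' + α2 a))) S) := by
  have hΓabs : 0 < |Γ| := abs_pos.2 hΓ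
  have hr : 0 < (ω / (|Γ| * ε))⁻¹ := by positivity
  have hb : |Γ| / (ω / (|Γ| * ε))⁻¹ = ω / ε := by
    field_simp
  have hf : Measurable (fun p : ℝ × ℝ => Γ * (p.1 - p.2)) :=
    (measurable_fst.sub measurable_snd).const_mul Γ
  have hjoint : P.map (fun a => (α1 a, α2 a))
      = (expMeasure (ω / (|Γ| * ε))⁻¹).prod (expMeasure (ω / (|Γ| * ε))⁻¹) := by
    have h := (indepFun_iff_map_prod_eq_prod_map_map hα1.aemeasurable hα2.aemeasurable).mp hindep
    rw [h, hlaw1, hlaw2]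
  have h1 : P.map (fun a => Γ * (α1 a - α2 a)) = laplaceMeasure (ω / ε) := by
    have hco : (fun a => Γ * (α1 a - α2 a))
        = (fun p : ℝ × ℝ => Γ * (p.1 - p.2)) ∘ (fun a => (α1 a, α2 a)) := rfl
    rw [hco, ← Measure.map_map hf (hα1.prodMk hα2), hjoint, map_scaled_diff hr hΓ, hb]
  refine ⟨h1, ?_⟩
  intro θ1 θ2 θ1' θ2' hadj S hS
  have hshift : ∀ u v : ℝ, P.map (fun a => Γ * ((u + α1 a) - (v + α2 a)))
      = Measure.map (fun x => Γ * (u - v) + x) (laplaceMeasure (ω / ε)) := by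
    intro u v
    have hco : (fun a => Γ * ((u + α1 a) - (v + α2 a)))
        = (fun x => Γ * (u - v) + x) ∘ (fun a => Γ * (α1 a - α2 a)) := by
      funext a
      simp only [Function.comp_apply]
      ring
    rw [hco, ← Measure.map_map (f := fun a => Γ * (α1 a - α2 a)) (measurable_const_add _) ((hα1.sub hα2).const_mul Γ), h1]
  rw [hshift θ1 θ2, hshift θ1' θ2']
  apply laplace_dp (by positivity)
  · rwa [div_mul_cancel₀ ω hε.ne']
  · exact hS
end
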